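/- Fix integers m ≥ 1 and n ≥ 1, and let X_m = {k/m : k = 0, 1, …, m} ⊆ ℝ. For k ∈ {1, 2}, let A_k, B_k be disjoint subsets of {1, …, n}, let c_k be an integer with 1 ≤ c_k ≤ m, and let integers p_{j,k} (j ∈ A_k) and q_{j,k} (j ∈ B_k) satisfy 1 ≤ p_{j,k} ≤ c_k and 1 ≤ q_{j,k} ≤ c_k. Define f_k : X_m^n → ℝ by f_k(x) = max(0, Σ_{j∈A_k} p_{j,k}·x_j − Σ_{j∈B_k} q_{j,k}·x_j + c_k/m − Σ_{j∈A_k} p_{j,k}). If f_1(x) = f_2(x) for all x ∈ X_m^n, then A_1 = A_2, B_1 = B_2, c_1 = c_2, p_{j,1} = p_{j,2} for all j ∈ A_1, and q_{j,1} = q_{j,2} for all j ∈ B_1. -/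

import Mathlib

/-!
Write the ⊙-neg function as `max 0 (c/m - D x)` with `D x = ∑_A p_j (1 - x_j) + ∑_B q_j x_j`.
On the cube `D ≥ 0`, and `D` vanishes at the vertex `1_A`, where the function takes its maximum
`c/m`. Comparing the two functions at `1_{A₁}` and at `1_{A₂}` gives `c₁ = c₂` and `A₁ = A₂`.
Moving coordinate `i` of the vertex one grid step into the cube raises `D` by `w_i / m`, where
`w_i` is `p_i`, `q_i` or `0` according as `i ∈ A`, `i ∈ B` or neither. Since `w_i ≤ c` the
function stays in its linear regime there, so it determines every `w_i`, hence `B`, `p` and `q`.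
-/

def Xm (m : ℕ) : Set ℝ := {x | ∃ k : ℕ, k ≤ m ∧ x = (k:ℝ) / m}

open Finset Function

lemma natCast_div_mem_Xm {m k : ℕ} (hk : k ≤ m) : (k : ℝ) / m ∈ Xm m := ⟨k, hk, rfl⟩

lemma zero_mem_Xm (m : ℕ) : (0 : ℝ) ∈ Xm m := by
  simpa using natCast_div_mem_Xm (Nat.zero_le m)

lemma one_mem_Xm {m : ℕ} (hm : 1 ≤ m) : (1 : ℝ) ∈ Xm m := by
  simpa [Nat.one_le_iff_ne_zero.1 hm] using natCast_div_mem_Xm le_rfl (m := m)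

lemma one_div_mem_Xm {m : ℕ} (hm : 1 ≤ m) : 1 / (m : ℝ) ∈ Xm m := by
  simpa using natCast_div_mem_Xm hm

lemma one_sub_one_div_mem_Xm {m : ℕ} (hm : 1 ≤ m) : 1 - 1 / (m : ℝ) ∈ Xm m := by
  have hm₀ : (m : ℝ) ≠ 0 := by positivity
  convert natCast_div_mem_Xm (Nat.sub_le m 1) using 1
  rw [Nat.cast_sub hm]
  field_simp
  ring

section Defect

variable {ι : Type*}

def defect (A B : Finset ι) (p q : ι → ℕ) (x : ι → ℝ) : ℝ :=
  ∑ j ∈ A, (p j : ℝ) * (1 - x j) + ∑ j ∈ B, (q j : ℝ) * x j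

lemma sum_mul_sub_sum_mul_add_sub_sum_eq_sub_defect (A B : Finset ι) (p q : ι → ℕ) (x : ι → ℝ)
    (a : ℝ) :
    ∑ j ∈ A, (p j : ℝ) * x j - ∑ j ∈ B, (q j : ℝ) * x j + a - ∑ j ∈ A, (p j : ℝ) =
      a - defect A B p q x := by
  simp only [defect, mul_sub, mul_one, sum_sub_distrib]
  ring

variable {A B : Finset ι} {p q : ι → ℕ} {x : ι → ℝ}

lemma defect_nonneg (hx : ∀ i, x i ∈ Set.Icc (0 : ℝ) 1) : 0 ≤ defect A B p q x :=
  add_nonneg (sum_nonneg fun j _ => mul_nonneg (Nat.cast_nonneg _) (sub_nonneg.2 (hx j).2))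
    (sum_nonneg fun j _ => mul_nonneg (Nat.cast_nonneg _) (hx j).1)

lemma mul_one_sub_le_defect (hx : ∀ i, x i ∈ Set.Icc (0 : ℝ) 1) {j : ι} (hj : j ∈ A) :
    (p j : ℝ) * (1 - x j) ≤ defect A B p q x :=
  le_add_of_le_of_nonneg
    (single_le_sum (fun i _ => mul_nonneg (Nat.cast_nonneg _) (sub_nonneg.2 (hx i).2)) hj)
    (sum_nonneg fun j _ => mul_nonneg (Nat.cast_nonneg _) (hx j).1)

variable [DecidableEq ι]

def vertex (A : Finset ι) : ι → ℝ := fun j => if j ∈ A then 1 else 0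

lemma vertex_mem_Icc (A : Finset ι) (i : ι) : vertex A i ∈ Set.Icc (0 : ℝ) 1 := by
  unfold vertex; split_ifs <;> simp

lemma vertex_mem_Xm (A : Finset ι) {m : ℕ} (hm : 1 ≤ m) (i : ι) : vertex A i ∈ Xm m := by
  unfold vertex; split_ifs
  exacts [one_mem_Xm hm, zero_mem_Xm m]

lemma defect_vertex (hd : Disjoint A B) : defect A B p q (vertex A) = 0 := by
  have hA : ∀ j ∈ A, (p j : ℝ) * (1 - vertex A j) = 0 := fun j hj => by simp [vertex, hj]
  have hB : ∀ j ∈ B, (q j : ℝ) * vertex A j = 0 := fun j hj => by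
    simp [vertex, disjoint_right.1 hd hj]
  simp [defect, sum_eq_zero hA, sum_eq_zero hB]

def weight (A B : Finset ι) (p q : ι → ℕ) (i : ι) : ℕ :=
  if i ∈ A then p i else if i ∈ B then q i else 0

lemma defect_update_vertex (hd : Disjoint A B) (i : ι) (δ : ℝ) :
    defect A B p q (update (vertex A) i (if i ∈ A then 1 - δ else δ)) = weight A B p q i * δ := by
  set x := update (vertex A) i (if i ∈ A then 1 - δ else δ)
  have hx : ∀ j ≠ i, x j = vertex A j := fun j hj => update_of_ne hj _ _
  have hA : ∑ j ∈ A, (p j : ℝ) * (1 - x j) = if i ∈ A then (p i : ℝ) * δ else 0 := by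
    split_ifs with hi
    · refine (sum_eq_single_of_mem i hi fun j hj hji => ?_).trans (by simp [x, hi])
      simp [hx j hji, vertex, hj]
    · exact sum_eq_zero fun j hj => by simp [hx j (ne_of_mem_of_not_mem hj hi), vertex, hj]
  have hB : ∑ j ∈ B, (q j : ℝ) * x j = if i ∈ B then (q i : ℝ) * δ else 0 := by
    split_ifs with hi
    · refine (sum_eq_single_of_mem i hi fun j hj hji => ?_).trans ?_
      · simp [hx j hji, vertex, disjoint_right.1 hd hj]
      · simp [x, disjoint_right.1 hd hi]
    · exact sum_eq_zero fun j hj => by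
        simp [hx j (ne_of_mem_of_not_mem hj hi), vertex, disjoint_right.1 hd hj]
  rw [defect, hA, hB, weight]
  by_cases hiA : i ∈ A
  · simp [hiA, disjoint_left.1 hd hiA]
  · by_cases hiB : i ∈ B <;> simp [hiA, hiB]

lemma weight_le {c : ℕ} (hp : ∀ j ∈ A, p j ≤ c) (hq : ∀ j ∈ B, q j ≤ c) (i : ι) :
    weight A B p q i ≤ c := by
  unfold weight
  split_ifs with hA hB
  exacts [hp i hA, hq i hB, Nat.zero_le c]

variable {A₁ A₂ B₁ B₂ : Finset ι} {p₁ p₂ q₁ q₂ : ι → ℕ}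

lemma le_and_subset_of_eq_at_vertex {a₁ a₂ : ℝ} (hd₁ : Disjoint A₁ B₁) (ha₁ : 0 < a₁)
    (hp₂ : ∀ j ∈ A₂, 1 ≤ p₂ j)
    (h : max 0 (a₁ - defect A₁ B₁ p₁ q₁ (vertex A₁)) =
      max 0 (a₂ - defect A₂ B₂ p₂ q₂ (vertex A₁))) :
    a₁ ≤ a₂ ∧ (a₂ ≤ a₁ → A₂ ⊆ A₁) := by
  set D := defect A₂ B₂ p₂ q₂ (vertex A₁)
  have hD : 0 ≤ D := defect_nonneg (vertex_mem_Icc A₁)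
  have hDa : a₂ - D = a₁ := by
    rw [defect_vertex hd₁, sub_zero, max_eq_right ha₁.le] at h
    rcases max_choice 0 (a₂ - D) with h₀ | h₀ <;> rw [h₀] at h
    · linarith
    · exact h.symm
  refine ⟨by linarith, fun ha j hj => by_contra fun hj₁ => ?_⟩
  have hpD : (p₂ j : ℝ) ≤ D := by
    simpa [vertex, hj₁] using mul_one_sub_le_defect (B := B₂) (q := q₂) (vertex_mem_Icc A₁) hj
  have hp : (1 : ℝ) ≤ p₂ j := by exact_mod_cast hp₂ j hj
  linarith

lemma weight_eq_of_eq_near_vertex {m c : ℕ} (hm : 1 ≤ m) (hd₁ : Disjoint A B₁)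
    (hd₂ : Disjoint A B₂) {i : ι} (hw₁ : weight A B₁ p₁ q₁ i ≤ c) (hw₂ : weight A B₂ p₂ q₂ i ≤ c)
    (h : ∀ x : ι → ℝ, (∀ i, x i ∈ Xm m) →
      max 0 ((c : ℝ) / m - defect A B₁ p₁ q₁ x) = max 0 ((c : ℝ) / m - defect A B₂ p₂ q₂ x)) :
    weight A B₁ p₁ q₁ i = weight A B₂ p₂ q₂ i := by
  have hx : ∀ j, update (vertex A) i (if i ∈ A then 1 - 1 / (m : ℝ) else 1 / m) j ∈ Xm m := by
    refine (forall_update_iff _ fun _ y => y ∈ Xm m).2 ⟨?_, fun j _ => vertex_mem_Xm A hm j⟩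
    split_ifs
    exacts [one_sub_one_div_mem_Xm hm, one_div_mem_Xm hm]
  have key := h _ hx
  have hle : ∀ w : ℕ, w ≤ c → 0 ≤ (c : ℝ) / m - w * (1 / m) := fun w hw => by
    rw [mul_one_div, sub_nonneg]
    gcongr
  rw [defect_update_vertex hd₁, defect_update_vertex hd₂, max_eq_right (hle _ hw₁),
    max_eq_right (hle _ hw₂)] at key
  exact_mod_cast mul_right_cancel₀ (by positivity) (sub_right_injective key)

lemma eq_of_weight_eq (hd₁ : Disjoint A B₁) (hd₂ : Disjoint A B₂)
    (hq₁ : ∀ j ∈ B₁, 1 ≤ q₁ j) (hq₂ : ∀ j ∈ B₂, 1 ≤ q₂ j)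
    (hw : ∀ i, weight A B₁ p₁ q₁ i = weight A B₂ p₂ q₂ i) :
    B₁ = B₂ ∧ (∀ j ∈ A, p₁ j = p₂ j) ∧ ∀ j ∈ B₁, q₁ j = q₂ j := by
  have hB₁₂ : B₁ = B₂ := by
    ext j
    by_cases hjA : j ∈ A
    · simp [disjoint_left.1 hd₁ hjA, disjoint_left.1 hd₂ hjA]
    · have := hw j
      by_cases hj₁ : j ∈ B₁ <;> by_cases hj₂ : j ∈ B₂ <;>
        simp only [weight, hjA, hj₁, hj₂, if_true, if_false] at this ⊢
      · exact absurd this (Nat.one_le_iff_ne_zero.1 (hq₁ j hj₁))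
      · exact absurd this.symm (Nat.one_le_iff_ne_zero.1 (hq₂ j hj₂))
  refine ⟨hB₁₂, fun j hj => by simpa [weight, hj] using hw j, fun j hj => ?_⟩
  simpa [weight, disjoint_right.1 hd₁ hj, hj, ← hB₁₂] using hw j

end Defect

theorem canonical_form_unique_general (m n : ℕ) (hm : 1 ≤ m)
    (A₁ A₂ B₁ B₂ : Finset (Fin n)) (hd₁ : Disjoint A₁ B₁) (hd₂ : Disjoint A₂ B₂)
    (c₁ c₂ : ℕ) (hc₁ : 1 ≤ c₁) (hc₂ : 1 ≤ c₂)
    (p₁ p₂ q₁ q₂ : Fin n → ℕ)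
    (hp₁ : ∀ j ∈ A₁, 1 ≤ p₁ j ∧ p₁ j ≤ c₁) (hq₁ : ∀ j ∈ B₁, 1 ≤ q₁ j ∧ q₁ j ≤ c₁)
    (hp₂ : ∀ j ∈ A₂, 1 ≤ p₂ j ∧ p₂ j ≤ c₂) (hq₂ : ∀ j ∈ B₂, 1 ≤ q₂ j ∧ q₂ j ≤ c₂)
    (heq : ∀ x : Fin n → ℝ, (∀ i, x i ∈ Xm m) →
      max 0 (∑ j ∈ A₁, (p₁ j : ℝ) * x j - ∑ j ∈ B₁, (q₁ j : ℝ) * x j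
        + (c₁:ℝ)/m - ∑ j ∈ A₁, (p₁ j : ℝ)) =
      max 0 (∑ j ∈ A₂, (p₂ j : ℝ) * x j - ∑ j ∈ B₂, (q₂ j : ℝ) * x j
        + (c₂:ℝ)/m - ∑ j ∈ A₂, (p₂ j : ℝ))) :
    A₁ = A₂ ∧ B₁ = B₂ ∧ c₁ = c₂ ∧
      (∀ j ∈ A₁, p₁ j = p₂ j) ∧ (∀ j ∈ B₁, q₁ j = q₂ j) := by
  have hm₀ : (0 : ℝ) < m := by exact_mod_cast hm
  have h : ∀ x : Fin n → ℝ, (∀ i, x i ∈ Xm m) →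
      max 0 ((c₁ : ℝ) / m - defect A₁ B₁ p₁ q₁ x) =
        max 0 ((c₂ : ℝ) / m - defect A₂ B₂ p₂ q₂ x) := by
    simpa only [sum_mul_sub_sum_mul_add_sub_sum_eq_sub_defect] using heq
  obtain ⟨hc₁₂, hA₂₁⟩ := le_and_subset_of_eq_at_vertex hd₁ (by positivity)
    (fun j hj => (hp₂ j hj).1) (h _ (vertex_mem_Xm A₁ hm))
  obtain ⟨hc₂₁, hA₁₂⟩ := le_and_subset_of_eq_at_vertex hd₂ (by positivity)
    (fun j hj => (hp₁ j hj).1) (h _ (vertex_mem_Xm A₂ hm)).symm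
  obtain rfl : c₁ = c₂ := by exact_mod_cast (div_left_inj' hm₀.ne').1 (hc₁₂.antisymm hc₂₁)
  obtain rfl : A₁ = A₂ := (hA₁₂ le_rfl).antisymm (hA₂₁ le_rfl)
  have hw i := weight_eq_of_eq_near_vertex hm hd₁ hd₂
    (weight_le (fun j hj => (hp₁ j hj).2) (fun j hj => (hq₁ j hj).2) i)
    (weight_le (fun j hj => (hp₂ j hj).2) (fun j hj => (hq₂ j hj).2) i) h
  obtain ⟨hB, hp, hq⟩ := eq_of_weight_eq hd₁ hd₂ (fun j hj => (hq₁ j hj).1)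
    (fun j hj => (hq₂ j hj).1) hw
  exact ⟨rfl, hB, rfl, hp, hq⟩

theorem canonical_form_unique (m n : ℕ) (hm : 1 ≤ m) (hn : 1 ≤ n)
    (A₁ A₂ B₁ B₂ : Finset (Fin n)) (hd₁ : Disjoint A₁ B₁) (hd₂ : Disjoint A₂ B₂)
    (c₁ c₂ : ℕ) (hc₁ : 1 ≤ c₁) (hc₁m : c₁ ≤ m) (hc₂ : 1 ≤ c₂) (hc₂m : c₂ ≤ m)
    (p₁ p₂ q₁ q₂ : Fin n → ℕ)
    (hp₁ : ∀ j ∈ A₁, 1 ≤ p₁ j ∧ p₁ j ≤ c₁) (hq₁ : ∀ j ∈ B₁, 1 ≤ q₁ j ∧ q₁ j ≤ c₁)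
    (hp₂ : ∀ j ∈ A₂, 1 ≤ p₂ j ∧ p₂ j ≤ c₂) (hq₂ : ∀ j ∈ B₂, 1 ≤ q₂ j ∧ q₂ j ≤ c₂)
    (heq : ∀ x : Fin n → ℝ, (∀ i, x i ∈ Xm m) →
      max 0 (∑ j ∈ A₁, (p₁ j : ℝ) * x j - ∑ j ∈ B₁, (q₁ j : ℝ) * x j
        + (c₁:ℝ)/m - ∑ j ∈ A₁, (p₁ j : ℝ)) =
      max 0 (∑ j ∈ A₂, (p₂ j : ℝ) * x j - ∑ j ∈ B₂, (q₂ j : ℝ) * x j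
        + (c₂:ℝ)/m - ∑ j ∈ A₂, (p₂ j : ℝ))) :
    A₁ = A₂ ∧ B₁ = B₂ ∧ c₁ = c₂ ∧
      (∀ j ∈ A₁, p₁ j = p₂ j) ∧ (∀ j ∈ B₁, q₁ j = q₂ j) :=
  canonical_form_unique_general m n hm A₁ A₂ B₁ B₂ hd₁ hd₂ c₁ c₂ hc₁ hc₂ p₁ p₂ q₁ q₂ hp₁ hq₁ hp₂ hq₂
    heq
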